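/- Let G be an abelian group and n ≥ 2. If X is a V^n_G-continuum, then X is an Alexandroff manifold with respect to the class D^{n-2}_G of all spaces of cohomological dimension dim_G ≤ n−2. -/

import Mathlib

open CategoryTheory Opposite Set Function Topology

universe u

/-- An abstract reduced Chech cohomology theory with coefficients in the abelian group `G`:
for each degree `k` a contravariant functor `Ȟᵏ(-;G)` from topological spaces to abelian
groups, which is homotopy invariant, vanishes on one-point spaces (reduced), and whose
reduced `0`-th group of the two-point discrete space (a `0`-sphere) is `G`. -/
structure CechTheory (G : Type u) [AddCommGroup G] : Type (u + 1) where
  H : ℕ → TopCat.{u}ᵒᵖ ⥤ AddCommGrpCat.{u}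
  reduced : ∀ (k : ℕ) (X : TopCat.{u}), Subsingleton (X : Type u) →
    ∀ a : (H k).obj (op X), a = 0
  homotopy_invariant : ∀ (k : ℕ) (X Y : TopCat.{u}) (f g : X ⟶ Y),
    ContinuousMap.Homotopic f.hom g.hom → (H k).map f.op = (H k).map g.op
  coeff : Nonempty ((H 0).obj (op (TopCat.of (ULift.{u} Bool))) ≃+ G)

namespace CechTheory

variable {G : Type u} [AddCommGroup G] (Ch : CechTheory G)

/-- The reduced Chech cohomology group `Ȟᵏ(X;G)`. -/
def grp (k : ℕ) (X : Type u) [TopologicalSpace X] : Type u :=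
  (Ch.H k).obj (op (TopCat.of X))

noncomputable instance (k : ℕ) (X : Type u) [TopologicalSpace X] :
    AddCommGroup (Ch.grp k X) :=
  inferInstanceAs (AddCommGroup ((Ch.H k).obj (op (TopCat.of X))))

/-- The induced homomorphism `f* : Ȟᵏ(Y;G) → Ȟᵏ(X;G)` of a continuous map `f : X → Y`. -/
def ind (k : ℕ) {X Y : Type u} [TopologicalSpace X] [TopologicalSpace Y]
    (f : C(X, Y)) : Ch.grp k Y → Ch.grp k X :=
  fun a => (Ch.H k).map (Quiver.Hom.op (TopCat.ofHom f : TopCat.of X ⟶ TopCat.of Y)) a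

end CechTheory

/-- The inclusion of a subspace as a continuous map. -/
def subIncl {X : Type u} [TopologicalSpace X] (A : Set X) : C(A, X) :=
  ⟨Subtype.val, continuous_subtype_val⟩

namespace CechTheory

variable {G : Type u} [AddCommGroup G] (Ch : CechTheory G)

/-- `Ȟᵏ(X;G)` is nontrivial. -/
def nontriv (k : ℕ) (X : Type u) [TopologicalSpace X] : Prop :=
  ∃ a : Ch.grp k X, a ≠ 0

/-- `dim_G X ≤ k`: the cohomological dimension of `X` with respect to `G` is at most `k`.
For compacta this is equivalent to the standard definition; it says that for every closed
subset `A ⊆ X` the restriction `Ȟᵐ(X;G) → Ȟᵐ(A;G)` is an epimorphism in all degrees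
`m ≥ k` and that `Ȟᵐ(A;G)` vanishes in all degrees `m > k`. -/
def dimLE (X : Type u) [TopologicalSpace X] (k : ℕ) : Prop :=
  ∀ m : ℕ, k ≤ m → ∀ A : Set X, IsClosed A →
    Surjective (Ch.ind m (subIncl A)) ∧ (k < m → ∀ a : Ch.grp m A, a = 0)

end CechTheory

/-- `ω` is an open cover of `X`. -/
def IsOpenCover {X : Type u} [TopologicalSpace X] (ω : Set (Set X)) : Prop :=
  (∀ U ∈ ω, IsOpen U) ∧ ⋃₀ ω = univ

/-- `P` is a partition in `X` between the disjoint closed sets `X₀` and `X₁`. -/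
def IsPartitionBetween {X : Type u} [TopologicalSpace X] (P X₀ X₁ : Set X) : Prop :=
  IsClosed P ∧ ∃ U V : Set X, IsOpen U ∧ IsOpen V ∧ Disjoint U V ∧
    X₀ ⊆ U ∧ X₁ ⊆ V ∧ Pᶜ = U ∪ V

/-- `C` is a partition (separator) of the space `X`. -/
def IsPartition {X : Type u} [TopologicalSpace X] (C : Set X) : Prop :=
  IsClosed C ∧ ∃ U V : Set X, IsOpen U ∧ IsOpen V ∧ U.Nonempty ∧ V.Nonempty ∧
    Disjoint U V ∧ Cᶜ = U ∪ V

/-- `f : P → Y` (defined on the subspace `P ⊆ X`) is an `ω`-map for an open cover `ω` of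
`X`: there is an open cover `γ` of `Y` such that `f⁻¹(γ)` refines `ω`. -/
def IsOmegaMap {X Y : Type u} [TopologicalSpace X] [TopologicalSpace Y]
    (ω : Set (Set X)) (P : Set X) (f : C(P, Y)) : Prop :=
  ∃ γ : Set (Set Y), IsOpenCover γ ∧
    ∀ V ∈ γ, ∃ W ∈ ω, f ⁻¹' V ⊆ Subtype.val ⁻¹' W

/-- `X` is a `V^n_G`-continuum (with respect to the Chech theory `Ch`). -/
def IsVnG {G : Type u} [AddCommGroup G] (Ch : CechTheory G) (n : ℕ)
    (X : Type u) [TopologicalSpace X] : Prop :=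
  ∀ X₀ X₁ : Set X, IsClosed X₀ → IsClosed X₁ → Disjoint X₀ X₁ →
    (interior X₀).Nonempty → (interior X₁).Nonempty →
    ∃ ω : Set (Set X), IsOpenCover ω ∧
      ∀ P : Set X, IsPartitionBetween P X₀ X₁ →
        ∀ (Y : Type u) (_ : TopologicalSpace Y) (g : C(P, Y)), Surjective g →
          IsOmegaMap ω P g → ¬ (∀ a : Ch.grp (n - 1) Y, Ch.ind (n - 1) g a = 0)

/-- `X` is a `V^n_G`-continuum with respect to the class `𝒜` of spaces. -/
def IsVnGWrt {G : Type u} [AddCommGroup G] (Ch : CechTheory G) (n : ℕ)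
    (𝒜 : ∀ Y : Type u, TopologicalSpace Y → Prop)
    (X : Type u) [TopologicalSpace X] : Prop :=
  ∀ X₀ X₁ : Set X, IsClosed X₀ → IsClosed X₁ → Disjoint X₀ X₁ →
    (interior X₀).Nonempty → (interior X₁).Nonempty →
    ∃ ω : Set (Set X), IsOpenCover ω ∧
      ∀ P : Set X, IsPartitionBetween P X₀ X₁ →
        ∀ (Y : Type u) (tY : TopologicalSpace Y) (g : C(P, Y)), Surjective g →
          𝒜 Y tY → IsOmegaMap ω P g →
            ¬ (∀ a : Ch.grp (n - 1) Y, Ch.ind (n - 1) g a = 0)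

/-- `X` is an Alexandroff manifold with respect to the class `𝒞` of spaces. -/
def IsAlexandroffManifold (𝒞 : ∀ Y : Type u, TopologicalSpace Y → Prop)
    (X : Type u) [TopologicalSpace X] : Prop :=
  ∀ X₀ X₁ : Set X, IsClosed X₀ → IsClosed X₁ → Disjoint X₀ X₁ →
    (interior X₀).Nonempty → (interior X₁).Nonempty →
    ∃ ω : Set (Set X), IsOpenCover ω ∧
      ∀ P : Set X, IsPartitionBetween P X₀ X₁ →
        ∀ (Y : Type u) (tY : TopologicalSpace Y) (g : C(P, Y)), Surjective g →
          𝒞 Y tY → ¬ IsOmegaMap ω P g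

/-- The covering (Lebesgue) dimension of `X` is at most `n`: every open cover has an
open refinement of order at most `n + 1`. -/
def CoveringDimLE (X : Type u) [TopologicalSpace X] (n : ℕ) : Prop :=
  ∀ ω : Set (Set X), IsOpenCover ω →
    ∃ ρ : Set (Set X), IsOpenCover ρ ∧ (∀ V ∈ ρ, ∃ W ∈ ω, V ⊆ W) ∧
      ∀ x : X, {V | V ∈ ρ ∧ x ∈ V}.encard ≤ (n + 1 : ℕ∞)

/-- `X` is a `Vⁿ`-continuum in the sense of Alexandroff. -/
def IsVn (n : ℕ) (X : Type u) [TopologicalSpace X] : Prop :=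
  ∀ X₀ X₁ : Set X, IsClosed X₀ → IsClosed X₁ → Disjoint X₀ X₁ →
    (interior X₀).Nonempty → (interior X₁).Nonempty →
    ∃ ω : Set (Set X), IsOpenCover ω ∧
      ∀ P : Set X, IsPartitionBetween P X₀ X₁ →
        ∀ (Y : Type u) (_ : TopologicalSpace Y) (g : C(P, Y)), Surjective g →
          CoveringDimLE Y (n - 2) → ¬ IsOmegaMap ω P g

/-- `X` is an `(n,G)`-bubble. -/
def IsBubble {G : Type u} [AddCommGroup G] (Ch : CechTheory G) (n : ℕ)
    (X : Type u) [TopologicalSpace X] : Prop :=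
  (∃ a : Ch.grp n X, a ≠ 0) ∧
    ∀ A : Set X, IsClosed A → A ≠ univ → ∀ a : Ch.grp n A, a = 0

/-- `X` is a generalized `(n,G)`-bubble. -/
def IsGenBubble {G : Type u} [AddCommGroup G] (Ch : CechTheory G) (n : ℕ)
    (X : Type u) [TopologicalSpace X] : Prop :=
  ∃ (Y : Type u) (_ : TopologicalSpace Y) (f : C(X, Y)), Surjective f ∧
    (∃ a : Ch.grp n Y, Ch.ind n f a ≠ 0) ∧
    ∀ A : Set X, IsClosed A → A ≠ univ →
      ∀ a : Ch.grp n Y, Ch.ind n (f.comp (subIncl A)) a = 0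

/-- An `ε`-map between metric spaces: all fibers have diameter `< ε`. -/
def IsEpsMap {X Y : Type u} [PseudoMetricSpace X] [TopologicalSpace Y] (ε : ℝ)
    (f : C(X, Y)) : Prop :=
  ∀ y : Y, Metric.diam (f ⁻¹' {y}) < ε

/-- A space is homogeneous if its homeomorphism group acts transitively. -/
def IsHomogeneous (X : Type u) [TopologicalSpace X] : Prop :=
  ∀ x y : X, ∃ h : X ≃ₜ X, h x = y

/-- A metric space `X` is an ANR (absolute neighborhood retract for metric spaces): whenever
`X` is embedded as a closed subset of a metric space, some neighborhood retracts onto it. -/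
def IsANR (X : Type u) [MetricSpace X] : Prop :=
  ∀ (Z : Type u) (_ : MetricSpace Z) (A : Set Z), IsClosed A → (X ≃ₜ A) →
    ∃ U : Set Z, IsOpen U ∧ A ⊆ U ∧
      ∃ r : C(U, A), ∀ (x : U) (hx : (x : Z) ∈ A), r x = ⟨x, hx⟩

/-- A metric space `M` is strongly `n`-universal: every map from a metric compactum of
covering dimension `≤ n` into `M` can be approximated arbitrarily closely by embeddings. -/
def StronglyUniversal (n : ℕ) (M : Type u) [MetricSpace M] : Prop :=
  ∀ (K : Type u) (_ : MetricSpace K), CompactSpace K → CoveringDimLE K n →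
    ∀ (g : C(K, M)) (ε : ℝ), 0 < ε →
      ∃ h : C(K, M), IsEmbedding h ∧ ∀ x : K, dist (g x) (h x) < ε

/-- `M` is an absolute extensor for `n`-dimensional (metric) compacta. -/
def IsAEForCompacta (n : ℕ) (M : Type u) [TopologicalSpace M] : Prop :=
  ∀ (Z : Type u) (_ : MetricSpace Z), CompactSpace Z → CoveringDimLE Z n →
    ∀ (A : Set Z), IsClosed A → ∀ f : C(A, M), ∃ F : C(Z, M), ∀ a : A, F a = f a

/-!
A space `Y` with `dim_G Y ≤ n - 2` has `Ȟⁿ⁻¹(Y;G) = 0` (take the closed subset `A = Y` in the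
definition of `dimLE`), so every map onto such a `Y` induces the zero homomorphism in degree
`n - 1`. Hence the cover `ω` witnessing the `V^n_G` property admits no `ω`-map of a partition
onto a member of `D^{n-2}_G`.
-/

namespace CechTheory

variable {G : Type u} [AddCommGroup G] (Ch : CechTheory G)

lemma ind_zero (k : ℕ) {X Y : Type u} [TopologicalSpace X] [TopologicalSpace Y]
    (f : C(X, Y)) : Ch.ind k f 0 = 0 :=
  map_zero _

lemma ind_comp (k : ℕ) {X Y Z : Type u} [TopologicalSpace X] [TopologicalSpace Y]
    [TopologicalSpace Z] (f : C(X, Y)) (g : C(Y, Z)) (a : Ch.grp k Z) :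
    Ch.ind k f (Ch.ind k g a) = Ch.ind k (g.comp f) a := by
  have hcomp : (TopCat.ofHom (g.comp f) : TopCat.of X ⟶ TopCat.of Z) =
      TopCat.ofHom f ≫ TopCat.ofHom g := rfl
  rw [ind, ind, ind, hcomp, op_comp, (Ch.H k).map_comp]
  rfl

lemma ind_id (k : ℕ) {X : Type u} [TopologicalSpace X] (a : Ch.grp k X) :
    Ch.ind k (ContinuousMap.id X) a = a := by
  have hid : (TopCat.ofHom (ContinuousMap.id X) : TopCat.of X ⟶ TopCat.of X) =
      𝟙 (TopCat.of X) := rfl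
  rw [ind, hid, op_id, (Ch.H k).map_id]
  rfl

lemma eq_zero_of_dimLE {Y : Type u} [TopologicalSpace Y] {k m : ℕ} (hY : Ch.dimLE Y k)
    (hkm : k < m) (a : Ch.grp m Y) : a = 0 := by
  have hvanish := (hY m hkm.le univ isClosed_univ).2 hkm
  let toUniv : C(Y, (univ : Set Y)) := (Homeomorph.Set.univ Y).symm
  calc a = Ch.ind m (ContinuousMap.id Y) a := (Ch.ind_id m a).symm
    _ = Ch.ind m toUniv (Ch.ind m (subIncl univ) a) :=
      (Ch.ind_comp m toUniv (subIncl univ) a).symm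
    _ = 0 := by rw [hvanish (Ch.ind m (subIncl univ) a), Ch.ind_zero]

end CechTheory

theorem IsVnG.isAlexandroffManifold_of_vanishing {G : Type u} [AddCommGroup G]
    {Ch : CechTheory G} {n : ℕ} {X : Type u} [TopologicalSpace X] (hX : IsVnG Ch n X)
    {𝒞 : ∀ Y : Type u, TopologicalSpace Y → Prop}
    (h𝒞 : ∀ Y tY, 𝒞 Y tY → ∀ a : @CechTheory.grp G _ Ch (n - 1) Y tY, a = 0) :
    IsAlexandroffManifold 𝒞 X := by
  intro X₀ X₁ hX₀ hX₁ hdisj hint₀ hint₁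
  obtain ⟨ω, hω, hnoMap⟩ := hX X₀ X₁ hX₀ hX₁ hdisj hint₀ hint₁
  refine ⟨ω, hω, fun P hP Y tY g hg hY hωg => hnoMap P hP Y tY g hg hωg fun a => ?_⟩
  rw [h𝒞 Y tY hY a, Ch.ind_zero]

theorem statement1_general {G : Type u} [AddCommGroup G] (Ch : CechTheory G) (n : ℕ) (hn : 2 ≤ n)
    (X : Type u) [MetricSpace X] (hX : IsVnG Ch n X) :
    IsAlexandroffManifold (fun Y tY => @CechTheory.dimLE G _ Ch Y tY (n - 2)) X :=
  hX.isAlexandroffManifold_of_vanishing fun _ _ hY => Ch.eq_zero_of_dimLE hY (by omega)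

/-- Let `G` be an abelian group and `n ≥ 2`. If the compactum `X` is a
`V^n_G`-continuum, then `X` is an Alexandroff manifold with respect to the class
`D^{n-2}_G` of all spaces of cohomological dimension `dim_G ≤ n - 2`. -/
theorem statement1 {G : Type u} [AddCommGroup G] (Ch : CechTheory G) (n : ℕ) (hn : 2 ≤ n)
    (X : Type u) [MetricSpace X] [CompactSpace X] (hX : IsVnG Ch n X) :
    IsAlexandroffManifold (fun Y tY => @CechTheory.dimLE G _ Ch Y tY (n - 2)) X :=
  statement1_general Ch n hn X hX
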